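/- For all integers j, k with 1 ≤ j < k, in the election F(j,k), the committee W = D_{k−1} ∪ {a} satisfies: (1) Δ(W, a, b) = δ(j,k); and (2) every voter v satisfies |A_v ∩ W| ≥ k − (j+1). -/
import Mathlib


/-- PAV score of committee `W` for an election whose voters are given by a list of
ballots (one list entry per voter). -/
def pavscL {C : Type*} [DecidableEq C] (ballots : List (Finset C)) (W : Finset C) : ℚ :=
  (ballots.map (fun A => ∑ j ∈ Finset.range ((A ∩ W).card), (1 : ℚ) / (j + 1))).sum

/-- `Δ(W,a,b) = pavsc((W ∖ {a}) ∪ {b}) − pavsc(W)` for a list-encoded election. -/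
def pavDeltaL {C : Type*} [DecidableEq C] (ballots : List (Finset C)) (W : Finset C)
    (a b : C) : ℚ :=
  pavscL ballots (insert b (W.erase a)) - pavscL ballots W

/-- Candidates: dummy candidates `d i`, the special candidates `a`, `b`, `x`, `y`,
and the chain candidates `c i`. -/
inductive Cand : Type
  | d : ℕ → Cand
  | a : Cand
  | b : Cand
  | x : Cand
  | y : Cand
  | c : ℕ → Cand
  deriving DecidableEq

/-- The set `D_ℓ = {d_1, …, d_ℓ}` of dummy candidates. -/
def Dset (ℓ : ℕ) : Finset Cand := (Finset.Icc 1 ℓ).image Cand.d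

/-- The relabelling exchanging the candidates `a` and `b`. -/
def swapAB : Cand → Cand
  | Cand.a => Cand.b
  | Cand.b => Cand.a
  | z => z

/-- The ballots of the election `F(j,k)` (candidate set `D_{k−1} ∪ {a,b}`, committee
size `k`): `F(1,k)` has two voters with ballots `D_{k−1} ∪ {a}` and `D_{k−2} ∪ {b}`;
`F(j,k)` for `j > 1` is the disjoint union of `F(j−1,k)` with `a,b` exchanged and
`F(j−1,k−1)` (whose candidates `a₂,b₂` are renamed to `a,b`). -/
def Fballots : ℕ → ℕ → List (Finset Cand)
  | 0, _ => []
  | 1, k => [Dset (k - 1) ∪ {Cand.a}, Dset (k - 2) ∪ {Cand.b}]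
  | (j + 2), k =>
      (Fballots (j + 1) k).map (Finset.image swapAB) ++ Fballots (j + 1) (k - 1)

/-- The ballots of the election `E(j,k)` (candidate set `D_{k−2} ∪ {x,y} ∪ {a,b}`,
committee size `k`): two disjoint copies of `F(j−1,k−1)`; in the first copy `a,b` are
exchanged and `x` is added to each ballot, in the second copy `y` is added to each
ballot. The natural bijection `s` sends the voter with index `v < 2^(j−1)` (first copy)
to the voter with index `v + 2^(j−1)` (second copy). -/
def Eballots (j k : ℕ) : List (Finset Cand) :=
  (Fballots (j - 1) (k - 1)).map (fun A => insert Cand.x (A.image swapAB)) ++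
  (Fballots (j - 1) (k - 1)).map (fun A => insert Cand.y A)

/-- `δ(j,k) = j! / ∏_{j'=0}^{j} (k − j')`. -/
def deltaFn (j k : ℕ) : ℚ :=
  (Nat.factorial j : ℚ) / ∏ j' ∈ Finset.range (j + 1), ((k : ℚ) - (j' : ℚ))

-- helpers
lemma swapAB_invol : Function.Involutive swapAB := by intro z; cases z <;> rfl
lemma swapAB_inj : Function.Injective swapAB := swapAB_invol.injective

@[simp] lemma mem_Dset {z : Cand} {ℓ : ℕ} :
    z ∈ Dset ℓ ↔ ∃ i, 1 ≤ i ∧ i ≤ ℓ ∧ Cand.d i = z := by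
  simp [Dset, Finset.mem_Icc, and_assoc]

lemma card_Dset (ℓ : ℕ) : (Dset ℓ).card = ℓ := by
  rw [Dset, Finset.card_image_of_injective _ (fun i j h => by injection h)]
  simp

lemma card_Dset_union_a (ℓ : ℕ) : (Dset ℓ ∪ {Cand.a}).card = ℓ + 1 := by
  rw [Finset.card_union_of_disjoint (by simp), card_Dset]; simp

lemma card_Dset_union_b (ℓ : ℕ) : (Dset ℓ ∪ {Cand.b}).card = ℓ + 1 := by
  rw [Finset.card_union_of_disjoint (by simp), card_Dset]; simp

lemma Wprime_eq (ℓ : ℕ) :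
    insert Cand.b ((Dset ℓ ∪ {Cand.a}).erase Cand.a) = Dset ℓ ∪ {Cand.b} := by
  ext z; cases z <;> simp

lemma image_swap_Dset (ℓ : ℕ) : (Dset ℓ).image swapAB = Dset ℓ := by
  rw [Dset, Finset.image_image]; rfl

lemma image_swap_W (ℓ : ℕ) :
    (Dset ℓ ∪ {Cand.a}).image swapAB = Dset ℓ ∪ {Cand.b} := by
  rw [Finset.image_union, image_swap_Dset]; rfl

lemma image_swap_W' (ℓ : ℕ) :
    (Dset ℓ ∪ {Cand.b}).image swapAB = Dset ℓ ∪ {Cand.a} := by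
  rw [Finset.image_union, image_swap_Dset]; rfl

lemma card_image_swap_inter (A W : Finset Cand) :
    ((A.image swapAB) ∩ W).card = (A ∩ W.image swapAB).card := by
  have h : (A ∩ W.image swapAB).image swapAB = A.image swapAB ∩ W := by
    rw [Finset.image_inter _ _ swapAB_inj, Finset.image_image,
        swapAB_invol.comp_self, Finset.image_id]
  rw [← h, Finset.card_image_of_injective _ swapAB_inj]

lemma pavscL_append {C : Type*} [DecidableEq C] (l1 l2 : List (Finset C)) (W : Finset C) :
    pavscL (l1 ++ l2) W = pavscL l1 W + pavscL l2 W := by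
  simp [pavscL]

lemma pavscL_congr {C : Type*} [DecidableEq C] {l : List (Finset C)} {W V : Finset C}
    (h : ∀ A ∈ l, (A ∩ W).card = (A ∩ V).card) : pavscL l W = pavscL l V := by
  unfold pavscL
  congr 1
  exact List.map_congr_left (fun A hA => by rw [h A hA])

lemma pavscL_swap (l : List (Finset Cand)) (W : Finset Cand) :
    pavscL (l.map (Finset.image swapAB)) W = pavscL l (W.image swapAB) := by
  unfold pavscL
  rw [List.map_map]
  congr 1
  apply List.map_congr_left
  intro A _
  simp only [Function.comp_apply, card_image_swap_inter]

lemma prodFac_ne_zero {j k : ℕ} (h : j < k) :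
    ∏ i ∈ Finset.range (j + 1), ((k : ℚ) - (i : ℚ)) ≠ 0 := by
  apply Finset.prod_ne_zero_iff.mpr
  intro i hi
  have hik : i < k := by
    have := Finset.mem_range.mp hi; omega
  have : (i : ℚ) < (k : ℚ) := by exact_mod_cast hik
  intro hc; linarith

lemma deltaFn_one (k : ℕ) :
    deltaFn 1 k = 1 / ((k : ℚ) * ((k : ℚ) - 1)) := by
  unfold deltaFn
  rw [Finset.prod_range_succ, Finset.prod_range_one]
  norm_num

lemma deltaFn_rec (j k : ℕ) (h : j + 1 < k) :
    deltaFn j (k - 1) - deltaFn j k = deltaFn (j + 1) k := by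
  have hk1 : ((k - 1 : ℕ) : ℚ) = (k : ℚ) - 1 := by
    have h' : 1 ≤ k := by omega
    push_cast [h']; ring
  have hKne : (k : ℚ) ≠ 0 := by
    have : 0 < k := by omega
    positivity
  have hKJ : (k : ℚ) - ((j : ℚ) + 1) ≠ 0 := by
    have : (j : ℚ) + 1 < (k : ℚ) := by exact_mod_cast h
    intro hc; linarith
  have hq1 : ∏ i ∈ Finset.range (j + 2), ((k : ℚ) - (i : ℚ)) =
      (∏ i ∈ Finset.range (j + 1), (((k - 1 : ℕ) : ℚ) - (i : ℚ))) * (k : ℚ) := by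
    rw [Finset.prod_range_succ']
    congr 1
    · apply Finset.prod_congr rfl
      intro i _
      rw [hk1]; push_cast; ring
    · norm_num
  have hq2 : ∏ i ∈ Finset.range (j + 2), ((k : ℚ) - (i : ℚ)) =
      (∏ i ∈ Finset.range (j + 1), ((k : ℚ) - (i : ℚ))) * ((k : ℚ) - ((j : ℚ) + 1)) := by
    rw [Finset.prod_range_succ]
    push_cast; ring
  have eB : ∏ i ∈ Finset.range (j + 1), (((k - 1 : ℕ) : ℚ) - (i : ℚ)) =
      (∏ i ∈ Finset.range (j + 2), ((k : ℚ) - (i : ℚ))) / (k : ℚ) := by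
    rw [hq1, mul_div_cancel_right₀ _ hKne]
  have eA : ∏ i ∈ Finset.range (j + 1), ((k : ℚ) - (i : ℚ)) =
      (∏ i ∈ Finset.range (j + 2), ((k : ℚ) - (i : ℚ))) / ((k : ℚ) - ((j : ℚ) + 1)) := by
    rw [hq2, mul_div_cancel_right₀ _ hKJ]
  unfold deltaFn
  rw [eB, eA, div_div_eq_mul_div, div_div_eq_mul_div, div_sub_div_same]
  congr 1
  push_cast [Nat.factorial_succ]
  ring

lemma Dset_mono {ℓ m : ℕ} (h : ℓ ≤ m) : Dset ℓ ⊆ Dset m :=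
  Finset.image_subset_image (Finset.Icc_subset_Icc_right h)

lemma Fballots_subset : ∀ j k, ∀ A ∈ Fballots j k,
    A ⊆ Dset (k - 1) ∪ {Cand.a, Cand.b} := by
  intro j
  induction j using Nat.strong_induction_on with
  | _ j ih =>
    match j with
    | 0 => intro k A hA; simp [Fballots] at hA
    | 1 =>
      intro k A hA
      simp only [Fballots, List.mem_cons, List.mem_singleton] at hA
      rcases hA with rfl | rfl | h
      · apply Finset.union_subset (Finset.Subset.trans (Finset.Subset.refl _)
          (Finset.subset_union_left))
        intro z hz; simp at hz; subst hz; simp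
      · apply Finset.union_subset
        · exact Finset.Subset.trans (Dset_mono (by omega)) Finset.subset_union_left
        · intro z hz; simp at hz; subst hz; simp
      · exact absurd h (by simp)
    | (n + 2) =>
      intro k A hA
      simp only [Fballots, List.mem_append, List.mem_map] at hA
      rcases hA with ⟨B, hB, rfl⟩ | hA
      · have hBsub := ih (n + 1) (by omega) k B hB
        intro z hz
        simp only [Finset.mem_image] at hz
        obtain ⟨w, hw, rfl⟩ := hz
        have := hBsub hw
        simp only [Finset.mem_union, Finset.mem_insert, Finset.mem_singleton] at this ⊢
        rcases this with h | h | h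
        · obtain ⟨i, h1, h2, rfl⟩ := mem_Dset.mp h
          left; exact mem_Dset.mpr ⟨i, h1, h2, rfl⟩
        · subst h; right; right; rfl
        · subst h; right; left; rfl
      · have hsub := ih (n + 1) (by omega) (k - 1) A hA
        refine Finset.Subset.trans hsub (Finset.union_subset_union ?_ (Finset.Subset.refl _))
        exact Dset_mono (by omega)

-- intersection lemmas for base case (k = m + 2)
lemma inter_b1 (m : ℕ) :
    (Dset (m + 1) ∪ {Cand.a}) ∩ (Dset (m + 1) ∪ {Cand.a}) = Dset (m + 1) ∪ {Cand.a} :=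
  Finset.inter_self _

lemma inter_b2 (m : ℕ) :
    (Dset m ∪ {Cand.b}) ∩ (Dset (m + 1) ∪ {Cand.a}) = Dset m := by
  ext z; cases z <;> simp <;> omega

lemma inter_b3 (m : ℕ) :
    (Dset (m + 1) ∪ {Cand.a}) ∩ (Dset (m + 1) ∪ {Cand.b}) = Dset (m + 1) := by
  ext z; cases z <;> simp <;> omega

lemma inter_b4 (m : ℕ) :
    (Dset m ∪ {Cand.b}) ∩ (Dset (m + 1) ∪ {Cand.b}) = Dset m ∪ {Cand.b} := by
  ext z; cases z <;> simp <;> omega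

-- second-copy intersection reduction
lemma inter_reduce {A : Finset Cand} {ℓ m : ℕ} (hsub : A ⊆ Dset ℓ ∪ {Cand.a, Cand.b})
    (h : ℓ ≤ m) (x : Cand) (hx : x = Cand.a ∨ x = Cand.b) :
    A ∩ (Dset m ∪ {x}) = A ∩ (Dset ℓ ∪ {x}) := by
  ext z
  simp only [Finset.mem_inter, Finset.mem_union, Finset.mem_singleton]
  constructor
  · rintro ⟨hzA, hz⟩
    refine ⟨hzA, ?_⟩
    have := hsub hzA
    simp only [Finset.mem_union, Finset.mem_insert, Finset.mem_singleton] at this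
    rcases hz with hz | hz
    · rcases this with h' | h' | h'
      · exact Or.inl h'
      · exfalso; subst h'
        rcases hx with rfl | rfl
        · obtain ⟨i, _, _, hi⟩ := mem_Dset.mp hz; cases hi
        · obtain ⟨i, _, _, hi⟩ := mem_Dset.mp hz; cases hi
      · exfalso; subst h'
        rcases hx with rfl | rfl
        · obtain ⟨i, _, _, hi⟩ := mem_Dset.mp hz; cases hi
        · obtain ⟨i, _, _, hi⟩ := mem_Dset.mp hz; cases hi
    · exact Or.inr hz
  · rintro ⟨hzA, hz⟩
    exact ⟨hzA, hz.imp (fun h' => Dset_mono h h') id⟩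

lemma pavDeltaL_eq (l : List (Finset Cand)) (ℓ : ℕ) :
    pavDeltaL l (Dset ℓ ∪ {Cand.a}) Cand.a Cand.b =
      pavscL l (Dset ℓ ∪ {Cand.b}) - pavscL l (Dset ℓ ∪ {Cand.a}) := by
  unfold pavDeltaL; rw [Wprime_eq]

/-- For `1 ≤ j < k`, in the election `F(j,k)` the committee
`W = D_{k−1} ∪ {a}` satisfies (1) `Δ(W,a,b) = δ(j,k)` and (2) every voter approves at
least `k − (j+1)` members of `W`. -/
theorem F_atomgroup (j k : ℕ) (hj : 1 ≤ j) (hjk : j < k) :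
    pavDeltaL (Fballots j k) (Dset (k - 1) ∪ {Cand.a}) Cand.a Cand.b = deltaFn j k ∧
    ∀ A ∈ Fballots j k,
      k - (j + 1) ≤ (A ∩ (Dset (k - 1) ∪ {Cand.a})).card := by
  induction j generalizing k with
  | zero => omega
  | succ n ih =>
    rcases Nat.eq_zero_or_pos n with hn | hn
    · -- base case j = 1
      subst hn
      obtain ⟨m, rfl⟩ : ∃ m, k = m + 2 := ⟨k - 2, by omega⟩
      have hk1 : m + 2 - 1 = m + 1 := by omega
      have hk2 : m + 2 - 2 = m := by omega
      constructor
      · rw [pavDeltaL_eq]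
        show pavscL [Dset (m + 2 - 1) ∪ {Cand.a}, Dset (m + 2 - 2) ∪ {Cand.b}] _ -
          pavscL [Dset (m + 2 - 1) ∪ {Cand.a}, Dset (m + 2 - 2) ∪ {Cand.b}] _ = _
        rw [hk1, hk2]
        unfold pavscL
        simp only [List.map_cons, List.map_nil, List.sum_cons, List.sum_nil]
        rw [inter_b1, inter_b2, inter_b3, inter_b4,
          card_Dset, card_Dset_union_a, card_Dset_union_b, card_Dset]
        rw [deltaFn_one]
        rw [Finset.sum_range_succ (n := m + 1), Finset.sum_range_succ (n := m)]
        have h1 : ((m : ℚ) + 2) ≠ 0 := by positivity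
        have h2 : ((m : ℚ) + 1) ≠ 0 := by positivity
        have h3 : ((m : ℚ) + 2 - 1) ≠ 0 := by
          intro hc; apply h2; linarith
        push_cast
        field_simp
        ring
      · intro A hA
        show m + 2 - (1 + 1) ≤ _
        simp only [Fballots, List.mem_cons, List.mem_singleton, List.not_mem_nil] at hA
        rcases hA with rfl | hA'
        · rw [hk1, inter_b1, card_Dset_union_a]; omega
        · rcases hA' with rfl | h
          · rw [hk1, hk2, inter_b2, card_Dset]
          · exact h.elim
    · -- step case: n = m + 1, j = m + 2
      obtain ⟨m, rfl⟩ : ∃ m, n = m + 1 := ⟨n - 1, by omega⟩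
      have hk3 : 3 ≤ k := by omega
      have hksub : k - 1 - 1 = k - 2 := by omega
      have ih1 := ih k (by omega) (by omega)
      have ih2 := ih (k - 1) (by omega) (by omega)
      have hFb : Fballots (m + 1 + 1) k =
          (Fballots (m + 1) k).map (Finset.image swapAB) ++ Fballots (m + 1) (k - 1) := rfl
      constructor
      · rw [pavDeltaL_eq, hFb, pavscL_append, pavscL_append,
          pavscL_swap, pavscL_swap, image_swap_W, image_swap_W']
        -- second-copy scores reduce to committee over Dset (k-2)
        have hsuba : pavscL (Fballots (m + 1) (k - 1)) (Dset (k - 1) ∪ {Cand.a}) =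
            pavscL (Fballots (m + 1) (k - 1)) (Dset (k - 2) ∪ {Cand.a}) := by
          apply pavscL_congr
          intro A hA
          have hsub := Fballots_subset (m + 1) (k - 1) A hA
          rw [hksub] at hsub
          rw [inter_reduce hsub (by omega) Cand.a (Or.inl rfl)]
        have hsubb : pavscL (Fballots (m + 1) (k - 1)) (Dset (k - 1) ∪ {Cand.b}) =
            pavscL (Fballots (m + 1) (k - 1)) (Dset (k - 2) ∪ {Cand.b}) := by
          apply pavscL_congr
          intro A hA
          have hsub := Fballots_subset (m + 1) (k - 1) A hA
          rw [hksub] at hsub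
          rw [inter_reduce hsub (by omega) Cand.b (Or.inr rfl)]
        rw [hsuba, hsubb]
        have e1 : pavscL (Fballots (m + 1) k) (Dset (k - 1) ∪ {Cand.b}) -
            pavscL (Fballots (m + 1) k) (Dset (k - 1) ∪ {Cand.a}) = deltaFn (m + 1) k := by
          rw [← pavDeltaL_eq]; exact ih1.1
        have e2 : pavscL (Fballots (m + 1) (k - 1)) (Dset (k - 2) ∪ {Cand.b}) -
            pavscL (Fballots (m + 1) (k - 1)) (Dset (k - 2) ∪ {Cand.a}) =
            deltaFn (m + 1) (k - 1) := by
          rw [← hksub, ← pavDeltaL_eq]; exact ih2.1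
        have := deltaFn_rec (m + 1) k (by omega)
        linarith
      · intro A hA
        rw [hFb, List.mem_append] at hA
        rcases hA with hA | hA
        · rw [List.mem_map] at hA
          obtain ⟨B, hB, rfl⟩ := hA
          rw [card_image_swap_inter, image_swap_W]
          have h1 := ih1.2 B hB
          have h2 : (B ∩ (Dset (k - 1) ∪ {Cand.a})).card ≤
              (B ∩ (Dset (k - 1) ∪ {Cand.b})).card + 1 := by
            have hsub : B ∩ (Dset (k - 1) ∪ {Cand.a}) ⊆
                insert Cand.a (B ∩ (Dset (k - 1) ∪ {Cand.b})) := by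
              intro z hz
              simp only [Finset.mem_inter, Finset.mem_union, Finset.mem_singleton] at hz
              rcases hz with ⟨hzB, hz | hz⟩
              · exact Finset.mem_insert_of_mem (Finset.mem_inter.mpr
                  ⟨hzB, Finset.mem_union_left _ hz⟩)
              · subst hz; exact Finset.mem_insert_self _ _
            calc (B ∩ (Dset (k - 1) ∪ {Cand.a})).card ≤ _ := Finset.card_le_card hsub
              _ ≤ _ := Finset.card_insert_le _ _
          omega
        · have hsub := Fballots_subset (m + 1) (k - 1) A hA
          rw [hksub] at hsub
          rw [inter_reduce hsub (by omega) Cand.a (Or.inl rfl)]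
          have := ih2.2 A hA
          rw [hksub] at this
          omega
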